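/- arXiv:2205.02528 — 3 statements merged into one kernel-verified Lean document; each statement's English description precedes it below -/
import Mathlib

section
/- For the system ẋ₁ = x₂, ẋ₂ = -6/(1-t)²·x₁ - 4/(1-t)·x₂, every solution defined on [s,1) with s ∈ [0,1) satisfies lim_{t→1⁻} (x₁(t), x₂(t)) = (0,0); i.e., the system has an absolute deadline at t = 1. -/
/-!
In the variable `τ = 1 - t` the system is the Euler equation `τ² x₁'' - 4 τ x₁' + 6 x₁ = 0`
(derivatives in `τ`), whose indicial roots are `2` and `3`. Accordingly
`(3 x₁ + (1 - t) x₂) / (1 - t)²` and `(2 x₁ + (1 - t) x₂) / (1 - t)³` are first integrals, so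
every solution is `x₁ = A (1 - t)² - B (1 - t)³`, `x₂ = -2 A (1 - t) + 3 B (1 - t)²`, which
tends to `0` as `t → 1⁻`.
-/

open Set Filter Topology

def IsSolutionOn (x₁ x₂ : ℝ → ℝ) (I : Set ℝ) : Prop :=
  ∀ t ∈ I, HasDerivAt x₁ (x₂ t) t ∧ HasDerivAt x₂ (-6 / (1 - t) ^ 2 * x₁ t - 4 / (1 - t) * x₂ t) t

theorem eq_of_hasDerivAt_zero_on_Ico {H : ℝ → ℝ} {s b : ℝ}
    (hH : ∀ u ∈ Ico s b, HasDerivAt H 0 u) : ∀ t ∈ Ico s b, H t = H s := by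
  intro t ht
  have hsub : Icc s t ⊆ Ico s b := fun u hu => ⟨hu.1, hu.2.trans_lt ht.2⟩
  exact constant_of_has_deriv_right_zero
    (fun u hu => (hH u (hsub hu)).continuousAt.continuousWithinAt)
    (fun u hu => (hH u (hsub (Ico_subset_Icc_self hu))).hasDerivWithinAt) t ⟨ht.1, le_rfl⟩

/-- `(n, c)` is `(2, 3)` or `(3, 2)`, the two indicial roots in either order. -/
theorem hasDerivAt_firstIntegral {x₁ x₂ : ℝ → ℝ} {t c : ℝ} {n : ℕ}
    (hsum : (n : ℝ) + c = 5) (hprod : (n : ℝ) * c = 6) (ht : t ≠ 1)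
    (h₁ : HasDerivAt x₁ (x₂ t) t)
    (h₂ : HasDerivAt x₂ (-6 / (1 - t) ^ 2 * x₁ t - 4 / (1 - t) * x₂ t) t) :
    HasDerivAt (fun u => (c * x₁ u + (1 - u) * x₂ u) / (1 - u) ^ n) 0 t := by
  obtain ⟨m, rfl⟩ : ∃ m, n = m + 1 :=
    Nat.exists_eq_succ_of_ne_zero (by rintro rfl; norm_num at hprod)
  have hτ : 1 - t ≠ 0 := sub_ne_zero.mpr ht.symm
  have hlin : HasDerivAt (fun u : ℝ => 1 - u) (-1) t := by
    simpa using (hasDerivAt_id t).const_sub 1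
  have hnum := (h₁.const_mul c).add (hlin.mul h₂)
  refine (hnum.div (hlin.pow (m + 1)) (pow_ne_zero _ hτ)).congr_deriv ?_
  simp only [Pi.add_apply, Pi.mul_apply, Pi.pow_apply, Nat.add_sub_cancel]
  push_cast at hsum hprod ⊢
  field_simp
  linear_combination (x₂ t * (1 - t) ^ (m + 2)) * hsum + (x₁ t * (1 - t) ^ (m + 1)) * hprod

theorem IsSolutionOn.eq_explicit {x₁ x₂ : ℝ → ℝ} {s : ℝ} (hsol : IsSolutionOn x₁ x₂ (Ico s 1)) :
    ∃ A B : ℝ, ∀ t ∈ Ico s 1,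
      x₁ t = A * (1 - t) ^ 2 - B * (1 - t) ^ 3 ∧ x₂ t = -2 * A * (1 - t) + 3 * B * (1 - t) ^ 2 := by
  have firstIntegral_const (c : ℝ) (n : ℕ) (hsum : (n : ℝ) + c = 5) (hprod : (n : ℝ) * c = 6) :=
    eq_of_hasDerivAt_zero_on_Ico fun u hu =>
      hasDerivAt_firstIntegral (x₁ := x₁) (x₂ := x₂) hsum hprod hu.2.ne (hsol u hu).1 (hsol u hu).2
  refine ⟨(3 * x₁ s + (1 - s) * x₂ s) / (1 - s) ^ 2, (2 * x₁ s + (1 - s) * x₂ s) / (1 - s) ^ 3,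
    fun t ht => ?_⟩
  have hA := firstIntegral_const 3 2 (by norm_num) (by norm_num) t ht
  have hB := firstIntegral_const 2 3 (by norm_num) (by norm_num) t ht
  have hτ : 1 - t ≠ 0 := sub_ne_zero.mpr ht.2.ne'
  rw [← hA, ← hB]
  constructor <;> field_simp <;> ring

/-- every solution of ẋ₁ = x₂, ẋ₂ = -6/(1-t)²x₁ - 4/(1-t)x₂ on [s,1)
    tends to (0,0) as t → 1⁻ (absolute deadline at t = 1). -/
theorem stmt1 (s : ℝ) (hs : s ∈ Set.Ico (0:ℝ) 1) (x₁ x₂ : ℝ → ℝ)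
    (hsol : ∀ t ∈ Set.Ico s (1:ℝ),
        HasDerivAt x₁ (x₂ t) t ∧
        HasDerivAt x₂ (-6/(1-t)^2 * x₁ t - 4/(1-t) * x₂ t) t) :
    Filter.Tendsto (fun t => (x₁ t, x₂ t)) (nhdsWithin 1 (Set.Iio 1))
      (nhds ((0:ℝ), (0:ℝ))) := by
  obtain ⟨A, B, hx⟩ := IsSolutionOn.eq_explicit hsol
  have hlim : Tendsto (fun t : ℝ => (A * (1 - t) ^ 2 - B * (1 - t) ^ 3,
      -2 * A * (1 - t) + 3 * B * (1 - t) ^ 2)) (𝓝[<] 1) (𝓝 (0, 0)) := by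
    refine (Continuous.tendsto' ?_ 1 _ ?_).mono_left nhdsWithin_le_nhds
    · fun_prop
    · norm_num
  refine hlim.congr' ?_
  filter_upwards [Ioo_mem_nhdsLT hs.2] with t ht
  obtain ⟨h₁, h₂⟩ := hx t (Ioo_subset_Ico_self ht)
  rw [h₁, h₂]
end

section
/- Suppose the chain-of-integrators system ẋᵢ = x_{i+1} (i = 1,…,n-1), ẋₙ = v(t,x) + d(t) on [0,T) with n ≥ 2 has an absolute deadline at T. Then for every pair δ, ε > 0 there exists s ∈ (0,T) such that for every solution x and every s' ∈ [s,T): if |x₁(s')| ≥ δ, then ‖x(t)‖ > ε for some t ∈ (s',T). -/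
open Set Filter

/-- A solution, on `[s,T)`, of the closed-loop integrator chain
    ẋᵢ = x_{i+1} (i < n), ẋₙ = v(t, x + η(t)) + d(t). -/
def ChainSol (n : ℕ) (hn : 0 < n) (T : ℝ)
    (v : ℝ → EuclideanSpace ℝ (Fin n) → ℝ) (d : ℝ → ℝ)
    (η : ℝ → EuclideanSpace ℝ (Fin n)) (s : ℝ)
    (x : ℝ → EuclideanSpace ℝ (Fin n)) : Prop :=
  ∀ t ∈ Set.Ico s T,
    (∀ i : Fin n, ∀ h : (i : ℕ) + 1 < n,
      HasDerivAt (fun τ => x τ i) (x t ⟨(i : ℕ) + 1, h⟩) t) ∧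
    HasDerivAt (fun τ => x τ ⟨n - 1, Nat.sub_lt hn one_pos⟩)
      (v t (x t + η t) + d t) t

/-- Absolute deadline at `T`: every noise-free solution from any initial time in
    `[0,T)` converges to `0` as `t → T⁻`. -/
def ChainAbsDeadline (n : ℕ) (hn : 0 < n) (T : ℝ)
    (v : ℝ → EuclideanSpace ℝ (Fin n) → ℝ) (d : ℝ → ℝ) : Prop :=
  ∀ s ∈ Set.Ico (0:ℝ) T, ∀ x : ℝ → EuclideanSpace ℝ (Fin n),
    ChainSol n hn T v d (fun _ => 0) s x →
    Filter.Tendsto x (nhdsWithin T (Set.Iio T)) (nhds 0)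

open Topology

theorem exists_hasDerivAt_eq_neg_div_of_tendsto_zero {f f' : ℝ → ℝ} {a b : ℝ} (hab : a < b)
    (hf : ∀ t ∈ Ico a b, HasDerivAt f (f' t) t) (hfb : Tendsto f (𝓝[<] b) (𝓝 0)) :
    ∃ c ∈ Ioo a b, f' c = -f a / (b - a) := by
  -- Rolle's theorem for `f` minus the chord from `(a, f a)` to `(b, 0)`
  set g : ℝ → ℝ := fun t => f t + f a * (t - b) / (b - a)
  have hchord : Continuous fun t : ℝ => f a * (t - b) / (b - a) := by fun_prop
  have hga : Tendsto g (𝓝[>] a) (𝓝 0) := by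
    have hfa : Tendsto f (𝓝[>] a) (𝓝 (f a)) :=
      tendsto_nhdsWithin_of_tendsto_nhds (hf a ⟨le_rfl, hab⟩).continuousAt.tendsto
    convert hfa.add (tendsto_nhdsWithin_of_tendsto_nhds (hchord.tendsto a)) using 2
    field_simp [(sub_pos.2 hab).ne']
    ring
  have hgb : Tendsto g (𝓝[<] b) (𝓝 0) := by
    convert hfb.add (tendsto_nhdsWithin_of_tendsto_nhds (hchord.tendsto b)) using 2
    simp
  have hg : ∀ t ∈ Ioo a b, HasDerivAt g (f' t + f a * 1 / (b - a)) t := fun t ht =>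
    (hf t (Ioo_subset_Ico_self ht)).add
      ((((hasDerivAt_id' t).sub_const b).const_mul (f a)).div_const (b - a))
  obtain ⟨c, hc, hgc⟩ := exists_hasDerivAt_eq_zero' hab hga hgb hg
  exact ⟨c, hc, by rw [mul_one] at hgc; rw [neg_div]; linarith⟩

/-- Lemma 1: if the chain has an absolute deadline at `T`, then for
    every δ, ε > 0 there is s ∈ (0,T) such that any solution with |x₁(s')| ≥ δ at
    some s' ∈ [s,T) satisfies ‖x(t)‖ > ε at some t ∈ (s',T). -/
theorem stmt4 (n : ℕ) (hn : 2 ≤ n) (T : ℝ) (hT : 0 < T)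
    (v : ℝ → EuclideanSpace ℝ (Fin n) → ℝ) (d : ℝ → ℝ)
    (habs : ChainAbsDeadline n (by omega) T v d) :
    ∀ δ > (0:ℝ), ∀ ε > (0:ℝ), ∃ s ∈ Set.Ioo (0:ℝ) T,
      ∀ s' ∈ Set.Ico s T, ∀ x : ℝ → EuclideanSpace ℝ (Fin n),
        ChainSol n (by omega) T v d (fun _ => 0) s' x →
        δ ≤ |x s' ⟨0, by omega⟩| →
        ∃ t ∈ Set.Ioo s' T, ε < ‖x t‖ := by
  intro δ hδ ε hε
  have hw : 0 < δ / (2 * ε) := by positivity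
  -- on a window shorter than `δ / (2ε)`, leaving `|x₁| ≥ δ` for `0` forces `|x₂| ≥ 2ε`
  refine ⟨max (T / 2) (T - δ / (2 * ε)), ⟨by positivity, max_lt (by linarith) (by linarith)⟩, ?_⟩
  rintro s' ⟨hs, hs'T⟩ x hx hδx
  have hwindow : T - s' ≤ δ / (2 * ε) := by linarith [le_max_right (T / 2) (T - δ / (2 * ε))]
  have hs'0 : 0 ≤ s' := le_trans (by positivity) (le_trans (le_max_left _ _) hs)
  have hx₁ : Tendsto (fun t => x t ⟨0, by omega⟩) (𝓝[<] T) (𝓝 0) :=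
    ((PiLp.continuous_apply 2 _ _).tendsto 0).comp (habs s' ⟨hs'0, hs'T⟩ x hx)
  obtain ⟨c, hc, hslope⟩ := exists_hasDerivAt_eq_neg_div_of_tendsto_zero
    (f' := fun t => x t ⟨1, by omega⟩) hs'T
    (fun t ht => (hx t ht).1 ⟨0, by omega⟩ (show 0 + 1 < n by omega)) hx₁
  refine ⟨c, hc, ?_⟩
  calc ε < 2 * ε := by linarith
    _ = δ / (δ / (2 * ε)) := by field_simp
    _ ≤ |x s' ⟨0, by omega⟩| / (T - s') :=
        div_le_div₀ (by positivity) hδx (by linarith) hwindow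
    _ = |x c ⟨1, by omega⟩| := by
        rw [hslope, neg_div, abs_neg, abs_div, abs_of_pos (sub_pos.2 hs'T)]
    _ ≤ ‖x c‖ := by simpa using PiLp.norm_apply_le (x c) _
end

section
/- Let x : [s,T] → ℝⁿ be absolutely continuous with x(T) = 0, x(s) ∈ [-δ,δ]ⁿ for some δ > 0, and satisfying ẋᵢ = x_{i+1} for i = 1,…,n-1 and ẋₙ = v(t, x(t)) + d(t) a.e. Suppose T - s ≤ δ/ε' with ε' > max(ε, δ), and suppose x(t) ∈ [-δ,δ]ⁿ for all t in some interval [s',T) with x_i(s') = δ for some index i. If i < n, then there exists t ∈ (s',T) with |x_{i+1}(t)| ≥ ε' > δ, contradicting x(t) ∈ [-δ,δ]ⁿ; hence necessarily i = n. -/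
open Set Filter

/-! The mean value theorem on `[s', T]` for the coordinate `xᵢ`, which falls from `δ` to `0` in
time `T - s' ≤ δ / ε'`, gives a time at which `|xᵢ₊₁| = |ẋᵢ| ≥ ε' > δ`, so the box is left
unless `i` is the last coordinate. -/

theorem exists_mem_Ioo_le_abs_deriv_of_right_eq_zero {f f' : ℝ → ℝ} {a b ε : ℝ} (hab : a < b)
    (hf : ContinuousOn f (Icc a b)) (hff' : ∀ t ∈ Ioo a b, HasDerivAt f (f' t) t)
    (hb : f b = 0) (hε : ε * (b - a) ≤ |f a|) : ∃ c ∈ Ioo a b, ε ≤ |f' c| := by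
  obtain ⟨c, hc, hslope⟩ := exists_hasDerivAt_eq_slope f f' hab hf hff'
  refine ⟨c, hc, ?_⟩
  have hba : 0 < b - a := sub_pos.2 hab
  rwa [hslope, hb, zero_sub, abs_div, abs_neg, abs_of_pos hba, le_div_iff₀ hba]

/-- interior step of the proof of Theorem 1(iii): for a chain
    trajectory vanishing at T, confined to the box [-δ,δ]ⁿ on [s',T) after
    entering it with x_i(s') = δ, and with T - s ≤ δ/ε', ε' > max(ε,δ): if
    i < n then some |x_{i+1}(t)| reaches ε' > δ, contradicting the box bound;
    hence the entry coordinate must be i = n. -/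
theorem stmt15 (n : ℕ) (s s' T δ ε ε' : ℝ)
    (x : ℝ → EuclideanSpace ℝ (Fin n))
    (hδ : 0 < δ) (hε' : max ε δ < ε')
    (hcont : ContinuousOn x (Set.Icc s T))
    (hchain : ∀ t ∈ Set.Ioo s T, ∀ i : Fin n, ∀ h : (i : ℕ) + 1 < n,
      HasDerivAt (fun τ => x τ i) (x t ⟨(i : ℕ) + 1, h⟩) t)
    (hxT : x T = 0)
    (hgap : T - s ≤ δ / ε')
    (hs' : s' ∈ Set.Ico s T)
    (hbox : ∀ t ∈ Set.Ico s' T, ∀ j : Fin n, |x t j| ≤ δ)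
    (i : Fin n) (hentry : x s' i = δ) :
    (∀ h : (i : ℕ) + 1 < n,
      ∃ t ∈ Set.Ioo s' T, ε' ≤ |x t ⟨(i : ℕ) + 1, h⟩|) ∧
    (i : ℕ) = n - 1 := by
  have hδε' : δ < ε' := (le_max_right ε δ).trans_lt hε'
  have hgap' : ε' * (T - s') ≤ |x s' i| := by
    rw [hentry, abs_of_pos hδ, ← le_div_iff₀' (hδ.trans hδε')]
    linarith [hs'.1]
  have hexit : ∀ h : (i : ℕ) + 1 < n, ∃ t ∈ Ioo s' T, ε' ≤ |x t ⟨(i : ℕ) + 1, h⟩| := fun h =>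
    exists_mem_Ioo_le_abs_deriv_of_right_eq_zero hs'.2
      (((PiLp.continuous_apply 2 _ i).comp_continuousOn hcont).mono (Icc_subset_Icc_left hs'.1))
      (fun t ht => hchain t ⟨hs'.1.trans_lt ht.1, ht.2⟩ i h) (by simp [hxT]) hgap'
  refine ⟨hexit, ?_⟩
  by_contra hlast
  have h : (i : ℕ) + 1 < n := by omega
  obtain ⟨t, ht, hε'le⟩ := hexit h
  linarith [hbox t (Ioo_subset_Ico_self ht) ⟨(i : ℕ) + 1, h⟩]
end
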